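/- arXiv:0706.3742 — 2 statements merged into one kernel-verified Lean document; each statement's English description precedes it below -/
import Mathlib

section
/- As formal power series (or for |q| < 1), Σ_{m≥0} (-z)^m q^{m(m-1)/2} / (q;q)_m = (z;q)_∞. -/
open scoped BigOperators

/-- The finite q-Pochhammer symbol `(a;q)_n`. -/
noncomputable def qPoch (a q : ℂ) : ℕ → ℂ
  | 0 => 1
  | n + 1 => qPoch a q n * (1 - a * q ^ n)

/-- The infinite q-Pochhammer symbol `(a;q)_∞`. -/
noncomputable def qPochInf (a q : ℂ) : ℂ := ∏' i : ℕ, (1 - a * q ^ i)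

/-!
Let `F(z) = ∑ c_m z^m` with `c_m = (-1)^m q^(m choose 2) / (q;q)_m`. The recursion
`c_(m+1) (1 - q^(m+1)) = -q^m c_m` makes `F` an entire function satisfying
`F(z) = (1 - z) F(qz)`, hence `F(z) = (z;q)_n F(q^n z)` for every `n`. As `n → ∞`,
`F(q^n z) → F(0) = 1` by dominated convergence, while `(z;q)_n → (z;q)_∞`.
-/

open Filter Topology

lemma qPoch_succ (a q : ℂ) (n : ℕ) : qPoch a q (n + 1) = qPoch a q n * (1 - a * q ^ n) := rfl

lemma qPoch_eq_prod (a q : ℂ) (n : ℕ) :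
    qPoch a q n = ∏ i ∈ Finset.range n, (1 - a * q ^ i) := by
  induction n with
  | zero => rfl
  | succ n ih => rw [qPoch_succ, ih, Finset.prod_range_succ]

lemma tendsto_qPoch_qPochInf {q : ℂ} (hq : ‖q‖ < 1) (a : ℂ) :
    Tendsto (qPoch a q) atTop (𝓝 (qPochInf a q)) := by
  have hsum : Summable fun i : ℕ ↦ ‖-(a * q ^ i)‖ := by
    simpa using (summable_geometric_of_lt_one (norm_nonneg q) hq).mul_left ‖a‖
  have hmul : Multipliable fun i : ℕ ↦ 1 - a * q ^ i := by
    simpa [← sub_eq_add_neg] using multipliable_one_add_of_summable hsum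
  rw [show qPoch a q = _ from funext (qPoch_eq_prod a q)]
  exact hmul.hasProd.tendsto_prod_nat

lemma one_sub_pow_ne_zero {q : ℂ} (hq : ‖q‖ < 1) {n : ℕ} (hn : n ≠ 0) :
    1 - q ^ n ≠ 0 := by
  intro h
  have hlt : ‖q ^ n‖ < 1 := by
    rw [norm_pow]
    exact pow_lt_one₀ (norm_nonneg q) hq hn
  rw [sub_eq_zero] at h
  simp [← h] at hlt

lemma qPoch_self_ne_zero {q : ℂ} (hq : ‖q‖ < 1) (n : ℕ) : qPoch q q n ≠ 0 := by
  rw [qPoch_eq_prod, Finset.prod_ne_zero_iff]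
  intro i _
  rw [← pow_succ']
  exact one_sub_pow_ne_zero hq i.succ_ne_zero

namespace Euler

noncomputable def coeff (q : ℂ) (m : ℕ) : ℂ := (-1) ^ m * q ^ m.choose 2 / qPoch q q m

noncomputable def series (q z : ℂ) : ℂ := ∑' m : ℕ, coeff q m * z ^ m

variable {q : ℂ}

@[simp]
lemma coeff_zero (q : ℂ) : coeff q 0 = 1 := by simp [coeff, qPoch]

lemma coeff_succ_mul (hq : ‖q‖ < 1) (m : ℕ) :
    coeff q (m + 1) * (1 - q ^ (m + 1)) = -q ^ m * coeff q m := by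
  have hm := qPoch_self_ne_zero hq m
  have hfac := one_sub_pow_ne_zero hq m.succ_ne_zero
  have hchoose : (m + 1).choose 2 = m.choose 2 + m := by
    simp [Nat.choose_succ_succ, add_comm]
  rw [coeff, coeff, hchoose, qPoch_succ, ← pow_succ']
  field_simp
  ring

lemma summable_norm_coeff_mul_pow (hq : ‖q‖ < 1) (z : ℂ) :
    Summable fun m ↦ ‖coeff q m * z ^ m‖ := by
  refine summable_of_ratio_norm_eventually_le (r := 1 / 2) (by norm_num) ?_
  have hsmall : ∀ᶠ m : ℕ in atTop, ‖q‖ ^ m * ‖z‖ ≤ (1 - ‖q‖) / 2 := by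
    have h := (tendsto_pow_atTop_nhds_zero_of_lt_one (norm_nonneg q) hq).mul_const ‖z‖
    rw [zero_mul] at h
    exact h.eventually_le_const (by linarith)
  filter_upwards [hsmall] with m hm
  simp only [norm_norm]
  have hratio : ‖coeff q (m + 1) * z ^ (m + 1)‖ * ‖1 - q ^ (m + 1)‖
      = ‖q‖ ^ m * ‖z‖ * ‖coeff q m * z ^ m‖ := by
    rw [← norm_mul, mul_right_comm, coeff_succ_mul hq]
    simp only [norm_mul, norm_neg, norm_pow]
    ring
  have hdenom : 1 - ‖q‖ ≤ ‖1 - q ^ (m + 1)‖ := by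
    calc 1 - ‖q‖ ≤ 1 - ‖q‖ ^ (m + 1) := by
          gcongr; exact pow_le_of_le_one (norm_nonneg q) hq.le (Nat.succ_ne_zero m)
      _ = ‖(1 : ℂ)‖ - ‖q ^ (m + 1)‖ := by simp
      _ ≤ ‖1 - q ^ (m + 1)‖ := norm_sub_norm_le _ _
  nlinarith [norm_nonneg (coeff q (m + 1) * z ^ (m + 1)), norm_nonneg (coeff q m * z ^ m),
    mul_le_mul_of_nonneg_right hm (norm_nonneg (coeff q m * z ^ m))]

lemma summable_coeff_mul_pow (hq : ‖q‖ < 1) (z : ℂ) : Summable fun m ↦ coeff q m * z ^ m :=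
  (summable_norm_coeff_mul_pow hq z).of_norm

lemma series_eq_one_sub_mul (hq : ‖q‖ < 1) (z : ℂ) :
    series q z = (1 - z) * series q (q * z) := by
  have hqz := (summable_coeff_mul_pow hq (q * z)).hasSum
  have hdiff : HasSum (fun m ↦ coeff q m * (1 - q ^ m) * z ^ m)
      (series q z - series q (q * z)) := by
    refine ((summable_coeff_mul_pow hq z).hasSum.sub hqz).congr_fun fun m ↦ ?_
    rw [mul_pow]
    ring
  have hshift : HasSum (fun m ↦ coeff q (m + 1) * (1 - q ^ (m + 1)) * z ^ (m + 1))
      (-z * series q (q * z)) := by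
    refine (hqz.mul_left (-z)).congr_fun fun m ↦ ?_
    rw [coeff_succ_mul hq, mul_pow]
    ring
  have hdiff_shift := (hasSum_nat_add_iff' 1).mpr hdiff
  simp only [Finset.sum_range_one, pow_zero, sub_self, mul_zero, zero_mul, sub_zero] at hdiff_shift
  linear_combination hdiff_shift.unique hshift

lemma series_eq_qPoch_mul (hq : ‖q‖ < 1) (z : ℂ) (n : ℕ) :
    series q z = qPoch z q n * series q (q ^ n * z) := by
  induction n with
  | zero => simp [qPoch]
  | succ n ih =>
    rw [ih, series_eq_one_sub_mul hq (q ^ n * z), ← mul_assoc q, ← pow_succ', qPoch_succ]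
    ring

lemma tendsto_series_pow_mul (hq : ‖q‖ < 1) (z : ℂ) :
    Tendsto (fun n : ℕ ↦ series q (q ^ n * z)) atTop (𝓝 1) := by
  have hscale : Tendsto (fun n : ℕ ↦ q ^ n * z) atTop (𝓝 0) := by
    simpa using (tendsto_pow_atTop_nhds_zero_of_norm_lt_one hq).mul_const z
  have hbound : ∀ (n m : ℕ), ‖coeff q m * (q ^ n * z) ^ m‖ ≤ ‖coeff q m * z ^ m‖ := by
    intro n m
    have hle : (‖q‖ ^ n) ^ m ≤ 1 :=
      pow_le_one₀ (by positivity) (pow_le_one₀ (norm_nonneg q) hq.le)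
    simp only [mul_pow, norm_mul, norm_pow]
    exact mul_le_mul_of_nonneg_left (mul_le_of_le_one_left (by positivity) hle) (norm_nonneg _)
  have hlim := tendsto_tsum_of_dominated_convergence (summable_norm_coeff_mul_pow hq z)
    (fun m ↦ (hscale.pow m).const_mul (coeff q m)) (Eventually.of_forall hbound)
  rwa [tsum_eq_single 0 (fun m hm ↦ by simp [hm]), pow_zero, mul_one, coeff_zero] at hlim

end Euler

/-- Euler's identity (the q-exponential expansion). -/
theorem stmt1 (q z : ℂ) (hq : ‖q‖ < 1) :
    ∑' m : ℕ, (-z) ^ m * q ^ (m * (m - 1) / 2) / qPoch q q m = qPochInf z q := by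
  have hseries : Euler.series q z = qPochInf z q := by
    have hconst := (tendsto_const_nhds (f := atTop)).congr (Euler.series_eq_qPoch_mul hq z)
    refine tendsto_nhds_unique hconst ?_
    simpa using (tendsto_qPoch_qPochInf hq z).mul (Euler.tendsto_series_pow_mul hq z)
  rw [← hseries, Euler.series]
  refine tsum_congr fun m ↦ ?_
  rw [Euler.coeff, ← Nat.choose_two_right, neg_pow]
  ring
end

section
/- Let A(t) act on the charge-zero bosonic ghost Fock space F^{−1}_{(0)} with basis indexed by pairs of partitions (λ, μ) of equal length l, where the basis vector v_{λ,μ} is an eigenvector of q^{L_0}A(t) with eigenvalue q^{|λ|+|μ|−l} (Σ_{i=1}^l (t^{λ_i−1/2} − t^{−μ_i+1/2}) + 1/(t^{−1/2}−t^{1/2})). Then the 1-point function A^{(0)}_{−1}(q;t) = Σ_{(λ,μ)} eigenvalue equals ₂Φ₁(0,0;q;q)/(t^{−1/2}−t^{1/2}) + t^{1/2} Σ_{i≥1} (q^{i−1}/((q;q)_{i−1}²)) (₃Φ₂(0,0,q; tq^i, q^i; q) − 1) − t^{−1/2} Σ_{i≥1} (q^{i−1}/((q;q)_{i−1}²)) (₃Φ₂(0,0,q;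 t^{−1}q^i, q^i; q) − 1). -/
open scoped BigOperators

/-- `₂Φ₁(0,0;q;q;q) = Σ_{n≥0} q^n/((q;q)_n)²`. -/
noncomputable def phi21zero (q : ℂ) : ℂ := ∑' n : ℕ, q ^ n / (qPoch q q n) ^ 2

/-- `₃Φ₂(0,0,q;b,c;q;q) = Σ_{n≥0} q^n/((b;q)_n (c;q)_n)`. -/
noncomputable def phi32zero (b c q : ℂ) : ℂ :=
  ∑' n : ℕ, q ^ n / (qPoch b q n * qPoch c q n)

/-- Partitions with exactly `l` positive parts. -/
def PartL (l : ℕ) : Type :=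
  {f : Fin l → ℕ // (∀ i j : Fin l, i ≤ j → f j ≤ f i) ∧ ∀ i, 0 < f i}

/-! Writing a partition `λ` with exactly `l` parts through its gaps `d_j = λ_j - λ_{j+1}`
(with `λ_{l+1} = 1`) turns `q^{|λ|-l} t^{λ_{k+1}-1}` into a monomial `∏_j r_j^{d_j}`, so every
sum over `λ` is a finite product of geometric series:
`Σ_λ q^{|λ|-l} = 1/(q;q)_l` and `Σ_λ q^{|λ|-l} t^{λ_{k+1}-1} = 1/((q;q)_k (tq^{k+1};q)_{l-k})`.
The `l`-th term of the trace is therefore `T A_l(T²) - T⁻¹ A_l(T⁻²) + q^l/((q;q)_l² (T⁻¹-T))`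
with `A_l(u) = q^l/(q;q)_l Σ_{k<l} 1/((q;q)_k (uq^{k+1};q)_{l-k})`, and resumming `A_l` over
`l = k + m + 1` with `(q;q)_{k+m+1} = (q;q)_k (q^{k+1};q)_{m+1}` produces the `₃Φ₂` series.
All rearrangements are justified by absolute convergence, which comes from the uniform bound
`|(a;q)_n| ≥ exp(-r/(1-r)²)` for `|a|, |q| ≤ r < 1`, applied with `r = |q|/|T|²`. -/

open Finset

lemma qPoch_eq_prod_range (a q : ℂ) (n : ℕ) :
    qPoch a q n = ∏ j ∈ range n, (1 - a * q ^ j) := by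
  induction n with
  | zero => rfl
  | succ n ih => rw [qPoch, ih, prod_range_succ]

lemma qPoch_add (a q : ℂ) (m n : ℕ) :
    qPoch a q (m + n) = qPoch a q m * qPoch (a * q ^ m) q n := by
  simp only [qPoch_eq_prod_range, prod_range_add, pow_add, mul_assoc]

lemma norm_mul_pow_succ_le {q : ℂ} (hq : ‖q‖ ≤ 1) (u : ℂ) (j : ℕ) :
    ‖u * q ^ (j + 1)‖ ≤ ‖u * q‖ := by
  rw [pow_succ', ← mul_assoc, norm_mul, norm_pow]
  exact mul_le_of_le_one_right (norm_nonneg _) (pow_le_one₀ (norm_nonneg q) hq)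

lemma prod_range_inv_one_sub_mul_pow (a q : ℂ) (n : ℕ) :
    ∏ j ∈ range n, (1 - a * q ^ j)⁻¹ = (qPoch a q n)⁻¹ := by
  rw [prod_inv_distrib, qPoch_eq_prod_range]

lemma exp_neg_div_le_one_sub {x r : ℝ} (hx : 0 ≤ x) (hxr : x ≤ r) (hr : r < 1) :
    Real.exp (-(x / (1 - r))) ≤ 1 - x := by
  have h1x : 0 < 1 - x := by linarith
  have hlog := Real.one_sub_inv_le_log_of_pos h1x
  calc Real.exp (-(x / (1 - r))) ≤ Real.exp (1 - (1 - x)⁻¹) := by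
        have hneg : 1 - (1 - x)⁻¹ = -(x / (1 - x)) := by field_simp; ring
        rw [hneg]
        gcongr
    _ ≤ Real.exp (Real.log (1 - x)) := by gcongr
    _ = 1 - x := Real.exp_log h1x

lemma exp_le_norm_qPoch {a q : ℂ} {r : ℝ} (hr : r < 1) (ha : ‖a‖ ≤ r) (hq : ‖q‖ ≤ r)
    (n : ℕ) : Real.exp (-(r / (1 - r) ^ 2)) ≤ ‖qPoch a q n‖ := by
  have hr0 : 0 ≤ r := (norm_nonneg q).trans hq
  have hfactor (j : ℕ) : ‖a * q ^ j‖ ≤ r ^ (j + 1) := by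
    rw [norm_mul, norm_pow, pow_succ']
    exact mul_le_mul ha (pow_le_pow_left₀ (norm_nonneg q) hq j) (by positivity) hr0
  have hpow (j : ℕ) : r ^ (j + 1) ≤ r := pow_le_of_le_one hr0 hr.le j.succ_ne_zero
  have hgeom : ∑ j ∈ range n, r ^ (j + 1) ≤ r / (1 - r) := by
    rw [range_eq_Ico, sum_Ico_add' (fun i => r ^ i)]
    simpa using geom_sum_Ico_le_of_lt_one (m := 0 + 1) (n := n + 1) hr0 hr
  calc Real.exp (-(r / (1 - r) ^ 2))
      ≤ Real.exp (-∑ j ∈ range n, r ^ (j + 1) / (1 - r)) := by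
        rw [← sum_div, sq, ← div_div]
        gcongr
    _ = ∏ j ∈ range n, Real.exp (-(r ^ (j + 1) / (1 - r))) := by
        rw [← sum_neg_distrib, Real.exp_sum]
    _ ≤ ∏ j ∈ range n, (1 - ‖a * q ^ j‖) := by
        gcongr with j
        exact (exp_neg_div_le_one_sub (by positivity) (hpow j) hr).trans (by linarith [hfactor j])
    _ ≤ ∏ j ∈ range n, ‖1 - a * q ^ j‖ := by
        refine prod_le_prod (fun j _ => ?_) (fun j _ => ?_)
        · linarith [hfactor j, hpow j]
        · simpa using norm_sub_norm_le (1 : ℂ) (a * q ^ j)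
    _ = ‖qPoch a q n‖ := by rw [qPoch_eq_prod_range, norm_prod]

lemma norm_pow_div_qPoch_mul_qPoch_le {a b q : ℂ} {r : ℝ} (hr : r < 1) (ha : ‖a‖ ≤ r)
    (hb : ‖b‖ ≤ r) (hq : ‖q‖ ≤ r) (n : ℕ) :
    ‖q ^ n / (qPoch a q n * qPoch b q n)‖ ≤ Real.exp (r / (1 - r) ^ 2) ^ 2 * ‖q‖ ^ n := by
  have hinv {c : ℂ} (hc : ‖c‖ ≤ r) : ‖qPoch c q n‖⁻¹ ≤ Real.exp (r / (1 - r) ^ 2) := by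
    rw [← inv_inv (Real.exp _), ← Real.exp_neg]
    exact inv_anti₀ (Real.exp_pos _) (exp_le_norm_qPoch hr hc hq n)
  rw [norm_div, norm_mul, norm_pow, div_eq_mul_inv, mul_inv, mul_comm, sq]
  gcongr
  exacts [hinv ha, hinv hb]

lemma summable_pow_div_qPoch_mul_qPoch {a b q : ℂ} {r : ℝ} (hr : r < 1) (ha : ‖a‖ ≤ r)
    (hb : ‖b‖ ≤ r) (hq : ‖q‖ ≤ r) :
    Summable fun n => q ^ n / (qPoch a q n * qPoch b q n) :=
  .of_norm_bounded ((summable_geometric_of_lt_one (norm_nonneg q) (hq.trans_lt hr)).mul_left _)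
    (norm_pow_div_qPoch_mul_qPoch_le hr ha hb hq)

lemma hasSum_phi21zero {q : ℂ} (hq : ‖q‖ < 1) :
    HasSum (fun n => q ^ n / qPoch q q n ^ 2) (phi21zero q) := by
  rw [phi21zero]
  simp_rw [sq]
  exact (summable_pow_div_qPoch_mul_qPoch hq le_rfl le_rfl le_rfl).hasSum

lemma hasSum_phi32zero_sub_one {b c q : ℂ} {r : ℝ} (hr : r < 1) (hb : ‖b‖ ≤ r) (hc : ‖c‖ ≤ r)
    (hq : ‖q‖ ≤ r) :
    HasSum (fun n => q ^ (n + 1) / (qPoch b q (n + 1) * qPoch c q (n + 1)))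
      (phi32zero b c q - 1) := by
  have h := (hasSum_nat_add_iff' 1).mpr (summable_pow_div_qPoch_mul_qPoch hr hb hc hq).hasSum
  simpa only [sum_range_one, pow_zero, qPoch.eq_1, mul_one, div_one, phi32zero] using h

theorem summable_norm_and_hasSum_prod_pi {R β : Type*} [NormedCommRing R] [CompleteSpace R]
    {n : ℕ} {f : Fin n → β → R} (hf : ∀ i, Summable fun k => ‖f i k‖) :
    (Summable fun x : Fin n → β => ‖∏ i, f i (x i)‖) ∧
      HasSum (fun x : Fin n → β => ∏ i, f i (x i)) (∏ i, ∑' k, f i k) := by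
  induction n with
  | zero => exact ⟨.of_finite, by simp⟩
  | succ n ih =>
    obtain ⟨ihnorm, ihsum⟩ := ih (f := fun i => f i.succ) (fun i => hf i.succ)
    have hnorm := Summable.mul_norm (hf 0) ihnorm
    have hsum := (hf 0).of_norm.hasSum.mul ihsum hnorm.of_norm
    have he (y : β × (Fin n → β)) :
        ∏ i, f i (Fin.consEquiv (fun _ => β) y i) = f 0 y.1 * ∏ i, f i.succ (y.2 i) := by
      simp [Fin.prod_univ_succ]
    rw [← (Fin.consEquiv fun _ => β).summable_iff, ← (Fin.consEquiv fun _ => β).hasSum_iff,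
      Fin.prod_univ_succ]
    simp only [Function.comp_def, he]
    exact ⟨hnorm, hsum⟩

lemma hasSum_prod_pow {𝕜 : Type*} [NormedField 𝕜] [CompleteSpace 𝕜] {n : ℕ} (r : Fin n → 𝕜)
    (hr : ∀ i, ‖r i‖ < 1) :
    HasSum (fun d : Fin n → ℕ => ∏ i, r i ^ d i) (∏ i, (1 - r i)⁻¹) := by
  have hnorm (i : Fin n) : Summable fun k => ‖r i ^ k‖ := by
    simpa [norm_pow] using summable_geometric_of_lt_one (norm_nonneg _) (hr i)
  simpa [tsum_geometric_of_norm_lt_one (hr _)] using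
    (summable_norm_and_hasSum_prod_pi hnorm).2

-- `Σ_λ q^{|λ|-l} Σ_i u^{λ_i-1}` over the partitions `λ` with exactly `l` parts.
noncomputable def markedSum (q u : ℂ) (l : ℕ) : ℂ :=
  ∑ k ∈ range l, (qPoch q q k)⁻¹ * (qPoch (u * q ^ (k + 1)) q (l - k))⁻¹

namespace PartL

variable {l : ℕ}

def tail (d : Fin l → ℕ) (k : ℕ) : ℕ := ∑ j : Fin l, if k ≤ (j : ℕ) then d j else 0

lemma tail_eq_zero_of_le (d : Fin l → ℕ) {k : ℕ} (hk : l ≤ k) : tail d k = 0 :=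
  sum_eq_zero fun j _ => if_neg (by omega)

lemma tail_eq_add_tail_succ (d : Fin l → ℕ) {k : ℕ} (hk : k < l) :
    tail d k = d ⟨k, hk⟩ + tail d (k + 1) := by
  have hsplit (j : Fin l) : (if k ≤ (j : ℕ) then d j else 0) =
      (if ⟨k, hk⟩ = j then d j else 0) + if k + 1 ≤ (j : ℕ) then d j else 0 := by
    rcases lt_trichotomy (j : ℕ) k with h | h | h
    · simp [Fin.ext_iff, h.ne', h.not_ge, (h.trans (Nat.lt_succ_self k)).not_ge]
    · simp [Fin.ext_iff, h]
    · simp [Fin.ext_iff, h.ne, h.le, Nat.succ_le_of_lt h]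
  simp only [tail, hsplit, sum_add_distrib, sum_ite_eq, mem_univ, if_true]

lemma tail_antitone (d : Fin l → ℕ) : Antitone (tail d) := fun k k' hkk' =>
  sum_le_sum fun j _ => by split_ifs <;> omega

lemma sum_tail (d : Fin l → ℕ) : ∑ i : Fin l, tail d i = ∑ j : Fin l, ((j : ℕ) + 1) * d j := by
  simp only [tail]
  rw [sum_comm]
  refine sum_congr rfl fun j _ => ?_
  rw [sum_ite, sum_const_zero, add_zero, sum_const, smul_eq_mul]
  simp only [Fin.val_fin_le]
  rw [filter_ge_eq_Iic, Fin.card_Iic]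

def ofGaps (d : Fin l → ℕ) : PartL l :=
  ⟨fun i => tail d i + 1, fun _ _ hij => Nat.add_le_add_right (tail_antitone d hij) 1,
    fun _ => Nat.succ_pos _⟩

def gaps (p : PartL l) (i : Fin l) : ℕ :=
  p.1 i - if h : (i : ℕ) + 1 < l then p.1 ⟨i + 1, h⟩ else 1

lemma gaps_ofGaps (d : Fin l → ℕ) : gaps (ofGaps d) = d := by
  funext i
  show tail d i + 1 - (if h : (i : ℕ) + 1 < l then tail d (i + 1) + 1 else 1) = d i
  rw [tail_eq_add_tail_succ d i.isLt]
  split_ifs with h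
  · simp
  · simp [tail_eq_zero_of_le d (not_lt.mp h)]

lemma tail_gaps_add_one (p : PartL l) {k : ℕ} (hk : k < l) :
    tail (gaps p) k + 1 = p.1 ⟨k, hk⟩ := by
  refine Nat.decreasingInduction
    (motive := fun k _ => ∀ hk : k < l, tail (gaps p) k + 1 = p.1 ⟨k, hk⟩)
    (fun k _ ih hk => ?_) (fun h => absurd h (lt_irrefl l)) hk.le hk
  rw [tail_eq_add_tail_succ _ hk]
  simp only [gaps]
  split_ifs with h
  · have := ih h
    have := p.2.1 ⟨k, hk⟩ ⟨k + 1, h⟩ (Fin.mk_le_mk.mpr k.le_succ)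
    omega
  · have := p.2.2 ⟨k, hk⟩
    rw [tail_eq_zero_of_le _ (not_lt.mp h)]
    omega

lemma ofGaps_gaps (p : PartL l) : ofGaps (gaps p) = p :=
  Subtype.ext <| funext fun i => tail_gaps_add_one p i.isLt

def gapsEquiv (l : ℕ) : (Fin l → ℕ) ≃ PartL l :=
  ⟨ofGaps, gaps, gaps_ofGaps, ofGaps_gaps⟩

lemma gapsEquiv_apply_coe (d : Fin l → ℕ) (i : Fin l) : (gapsEquiv l d).1 i = tail d i + 1 := rfl

lemma pow_sum_tail_mul_pow_tail (q u : ℂ) (d : Fin l → ℕ) (k : ℕ) :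
    q ^ (∑ i : Fin l, tail d i) * u ^ tail d k =
      ∏ j : Fin l, (if k ≤ (j : ℕ) then u * q ^ ((j : ℕ) + 1) else q ^ ((j : ℕ) + 1)) ^ d j := by
  rw [sum_tail, tail, ← prod_pow_eq_pow_sum, ← prod_pow_eq_pow_sum, ← prod_mul_distrib]
  refine prod_congr rfl fun j _ => ?_
  split_ifs <;> ring

lemma hasSum_pow_sum_tail_mul_pow_tail {q u : ℂ} (hq : ‖q‖ < 1) (hu : ‖u * q‖ < 1) {k : ℕ}
    (hk : k ≤ l) :
    HasSum (fun d : Fin l → ℕ => q ^ (∑ i : Fin l, tail d i) * u ^ tail d k)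
      ((qPoch q q k)⁻¹ * (qPoch (u * q ^ (k + 1)) q (l - k))⁻¹) := by
  set r : Fin l → ℂ := fun j => if k ≤ (j : ℕ) then u * q ^ ((j : ℕ) + 1) else q ^ ((j : ℕ) + 1)
  have hr (j : Fin l) : ‖r j‖ < 1 := by
    by_cases hj : k ≤ (j : ℕ)
    · simpa [r, hj] using (norm_mul_pow_succ_le hq.le u j).trans_lt hu
    · simpa [r, hj] using (norm_mul_pow_succ_le hq.le 1 j).trans_lt (by simpa using hq)
  have hval : (qPoch q q k)⁻¹ * (qPoch (u * q ^ (k + 1)) q (l - k))⁻¹ = ∏ j, (1 - r j)⁻¹ := by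
    rw [Fin.prod_univ_eq_prod_range
        (fun j => (1 - if k ≤ j then u * q ^ (j + 1) else q ^ (j + 1))⁻¹),
      ← Nat.add_sub_cancel' hk, prod_range_add, Nat.add_sub_cancel_left,
      ← prod_range_inv_one_sub_mul_pow, ← prod_range_inv_one_sub_mul_pow]
    congr 1
    · refine prod_congr rfl fun j hj => ?_
      rw [if_neg (by simpa using hj), pow_succ']
    · refine prod_congr rfl fun j _ => ?_
      rw [if_pos (by omega)]
      ring
  simp_rw [pow_sum_tail_mul_pow_tail, hval]
  exact hasSum_prod_pow r hr

lemma hasSum_pow_sum_tail {q : ℂ} (hq : ‖q‖ < 1) :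
    HasSum (fun d : Fin l → ℕ => q ^ (∑ i : Fin l, tail d i)) (qPoch q q l)⁻¹ := by
  simpa [tail_eq_zero_of_le, qPoch] using
    hasSum_pow_sum_tail_mul_pow_tail (u := 1) hq (by simpa using hq) le_rfl

lemma hasSum_pow_sum_tail_mul_sum_pow_tail {q u : ℂ} (hq : ‖q‖ < 1)
    (hu : ‖u * q‖ < 1) :
    HasSum (fun d : Fin l → ℕ => q ^ (∑ i : Fin l, tail d i) * ∑ i : Fin l, u ^ tail d i)
      (markedSum q u l) := by
  simp_rw [mul_sum]
  rw [markedSum, ← Fin.sum_univ_eq_sum_range]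
  exact hasSum_sum fun i _ => hasSum_pow_sum_tail_mul_pow_tail hq hu i.isLt.le

lemma eigenvalue_gapsEquiv (q T c : ℂ) (d e : Fin l → ℕ) :
    q ^ ((∑ i, (gapsEquiv l d).1 i) + (∑ i, (gapsEquiv l e).1 i) - l) *
        ((∑ i, (T ^ (2 * (gapsEquiv l d).1 i - 1) - (T⁻¹) ^ (2 * (gapsEquiv l e).1 i - 1))) + c) =
      q ^ l * (T * (q ^ (∑ i : Fin l, tail d i) * ∑ i : Fin l, (T ^ 2) ^ tail d i) *
          q ^ (∑ i : Fin l, tail e i) -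
        T⁻¹ * q ^ (∑ i : Fin l, tail d i) *
          (q ^ (∑ i : Fin l, tail e i) * ∑ i : Fin l, ((T ^ 2)⁻¹) ^ tail e i) +
        c * q ^ (∑ i : Fin l, tail d i) * q ^ (∑ i : Fin l, tail e i)) := by
  have hexp : (∑ i, (gapsEquiv l d).1 i) + (∑ i, (gapsEquiv l e).1 i) - l =
      l + (∑ i : Fin l, tail d i) + ∑ i : Fin l, tail e i := by
    simp only [gapsEquiv_apply_coe, sum_add_distrib, sum_const, card_univ, Fintype.card_fin,
      smul_eq_mul, mul_one]
    omega
  have hodd (x : ℂ) (f : Fin l → ℕ) (i : Fin l) :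
      x ^ (2 * (gapsEquiv l f).1 i - 1) = x * (x ^ 2) ^ tail f i := by
    rw [gapsEquiv_apply_coe, show 2 * (tail f i + 1) - 1 = 2 * tail f i + 1 by omega, pow_succ',
      pow_mul]
  simp only [hexp, hodd, inv_pow, pow_add, sum_sub_distrib, ← mul_sum]
  ring

theorem tsum_tsum_eigenvalue {q T c : ℂ} (hq : ‖q‖ < 1) (ht : ‖T ^ 2 * q‖ < 1)
    (ht' : ‖(T ^ 2)⁻¹ * q‖ < 1) (l : ℕ) :
    ∑' p : PartL l, ∑' m : PartL l,
        q ^ ((∑ i, p.1 i) + (∑ i, m.1 i) - l) *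
          ((∑ i, (T ^ (2 * p.1 i - 1) - (T⁻¹) ^ (2 * m.1 i - 1))) + c) =
      T * (q ^ l * (qPoch q q l)⁻¹ * markedSum q (T ^ 2) l) -
        T⁻¹ * (q ^ l * (qPoch q q l)⁻¹ * markedSum q (T ^ 2)⁻¹ l) +
        c * (q ^ l / qPoch q q l ^ 2) := by
  have hP := hasSum_pow_sum_tail (l := l) hq
  have hX := hasSum_pow_sum_tail_mul_sum_pow_tail (l := l) hq ht
  have hY := hasSum_pow_sum_tail_mul_sum_pow_tail (l := l) hq ht'
  simp_rw [← (gapsEquiv l).tsum_eq, eigenvalue_gapsEquiv]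
  have hinner (d : Fin l → ℕ) :=
    (((hP.mul_left (T * (q ^ (∑ i : Fin l, tail d i) * ∑ i : Fin l, (T ^ 2) ^ tail d i))).sub
      (hY.mul_left (T⁻¹ * q ^ (∑ i : Fin l, tail d i)))).add
      (hP.mul_left (c * q ^ (∑ i : Fin l, tail d i)))).mul_left (q ^ l)
  have houter := (((hX.mul_left (T * (qPoch q q l)⁻¹)).sub
    (hP.mul_left (T⁻¹ * markedSum q (T ^ 2)⁻¹ l))).add
    (hP.mul_left (c * (qPoch q q l)⁻¹))).mul_left (q ^ l)
  rw [tsum_congr fun d => (hinner d).tsum_eq]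
  convert houter.tsum_eq using 1
  · exact tsum_congr fun d => by ring
  · ring

end PartL

theorem HasSum.sum_antidiagonal {M : Type*} [AddCommMonoid M] [TopologicalSpace M]
    [ContinuousAdd M] [RegularSpace M] {f : ℕ × ℕ → M} {a : M} (h : HasSum f a) :
    HasSum (fun n => ∑ p ∈ antidiagonal n, f p) a :=
  (HasAntidiagonal.sigmaAntidiagonalEquivProd.hasSum_iff.mpr h).sigma fun n =>
    (antidiagonal n).hasSum f

lemma pow_mul_qPoch_inv_add_succ (q u : ℂ) (k m : ℕ) :
    q ^ (k + m + 1) * (qPoch q q (k + m + 1))⁻¹ *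
        ((qPoch q q k)⁻¹ * (qPoch (u * q ^ (k + 1)) q (m + 1))⁻¹) =
      q ^ k / qPoch q q k ^ 2 *
        (q ^ (m + 1) / (qPoch (u * q ^ (k + 1)) q (m + 1) * qPoch (q ^ (k + 1)) q (m + 1))) := by
  rw [add_assoc, qPoch_add, ← pow_succ', pow_add]
  simp only [div_eq_mul_inv, mul_inv]
  ring

theorem hasSum_markedSum {q u : ℂ} {r : ℝ} (hr : r < 1) (hq : ‖q‖ ≤ r) (hu : ‖u * q‖ ≤ r) :
    HasSum (fun l => q ^ l * (qPoch q q l)⁻¹ * markedSum q u l)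
      (∑' k, q ^ k / qPoch q q k ^ 2 * (phi32zero (u * q ^ (k + 1)) (q ^ (k + 1)) q - 1)) := by
  have hq1 : ‖q‖ ≤ 1 := hq.trans hr.le
  have hb (k : ℕ) : ‖u * q ^ (k + 1)‖ ≤ r := (norm_mul_pow_succ_le hq1 u k).trans hu
  have hc (k : ℕ) : ‖q ^ (k + 1)‖ ≤ r := by
    simpa using (norm_mul_pow_succ_le hq1 1 k).trans (by simpa using hq)
  set F : ℕ × ℕ → ℂ := fun p => q ^ p.1 / qPoch q q p.1 ^ 2 *
    (q ^ (p.2 + 1) / (qPoch (u * q ^ (p.1 + 1)) q (p.2 + 1) * qPoch (q ^ (p.1 + 1)) q (p.2 + 1)))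
  have hfiber (k : ℕ) := (hasSum_phi32zero_sub_one hr (hb k) (hc k) hq).mul_left
    (q ^ k / qPoch q q k ^ 2)
  have hF : Summable F := by
    set K := Real.exp (r / (1 - r) ^ 2) ^ 2
    have hgeom : Summable fun n => K * ‖q‖ ^ n :=
      (summable_geometric_of_lt_one (norm_nonneg q) (hq.trans_lt hr)).mul_left K
    refine .of_norm_bounded (hgeom.mul_of_nonneg ((summable_nat_add_iff 1).mpr hgeom)
      (fun _ => by positivity) (fun _ => by positivity)) fun p => ?_
    rw [norm_mul]
    refine mul_le_mul ?_ (norm_pow_div_qPoch_mul_qPoch_le hr (hb _) (hc _) hq _)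
      (norm_nonneg _) (by positivity)
    have h := norm_pow_div_qPoch_mul_qPoch_le hr hq hq hq p.1
    rwa [← sq] at h
  rw [(hF.hasSum.prod_fiberwise hfiber).tsum_eq, ← hasSum_nat_add_iff' 1]
  simp only [sum_range_one, markedSum, range_zero, sum_empty, mul_zero, sub_zero]
  refine hF.hasSum.sum_antidiagonal.congr_fun fun n => ?_
  rw [Nat.sum_antidiagonal_eq_sum_range_succ (fun k m => F (k, m)), mul_sum]
  refine sum_congr rfl fun k hk => ?_
  obtain ⟨m, rfl⟩ := Nat.exists_eq_add_of_le (Nat.lt_succ_iff.mp (mem_range.mp hk))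
  rw [show k + m + 1 - k = m + 1 by omega, Nat.add_sub_cancel_left]
  exact pow_mul_qPoch_inv_add_succ q u k m

/-- Here `t = T²`, so `t^{λ_i-1/2} = T^{2λ_i-1}`, `t^{-μ_i+1/2} = (T⁻¹)^{2μ_i-1}` and
`1/(t^{-1/2}-t^{1/2}) = 1/(T⁻¹-T)`; the one-based sums over `i ≥ 1` are written with `i = a + 1`. -/
theorem stmt17_general (q T : ℂ) (hT : ‖T‖ < 1)
    (hqT : ‖q‖ < ‖T‖ ^ 2) :
    ∑' l : ℕ, ∑' p : PartL l, ∑' m : PartL l,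
        q ^ ((∑ i, p.1 i) + (∑ i, m.1 i) - l) *
          ((∑ i, (T ^ (2 * p.1 i - 1) - (T⁻¹) ^ (2 * m.1 i - 1))) +
            1 / (T⁻¹ - T)) =
      phi21zero q / (T⁻¹ - T) +
        T * ∑' a : ℕ, q ^ a / (qPoch q q a) ^ 2 *
            (phi32zero (T ^ 2 * q ^ (a + 1)) (q ^ (a + 1)) q - 1) -
        T⁻¹ * ∑' a : ℕ, q ^ a / (qPoch q q a) ^ 2 *
            (phi32zero ((T ^ 2)⁻¹ * q ^ (a + 1)) (q ^ (a + 1)) q - 1) := by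
  have hT2 : 0 < ‖T‖ ^ 2 := (norm_nonneg q).trans_lt hqT
  set r := ‖q‖ / ‖T‖ ^ 2
  have hr : r < 1 := (div_lt_one hT2).mpr hqT
  have hqr : ‖q‖ ≤ r := le_div_self (norm_nonneg q) hT2 (pow_le_one₀ (norm_nonneg T) hT.le)
  have htr : ‖T ^ 2 * q‖ ≤ r := by
    rw [norm_mul, norm_pow]
    exact (mul_le_of_le_one_left (norm_nonneg q) (pow_le_one₀ (norm_nonneg T) hT.le)).trans hqr
  have ht'r : ‖(T ^ 2)⁻¹ * q‖ ≤ r := by rw [norm_mul, norm_inv, norm_pow, inv_mul_eq_div]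
  have hA := hasSum_markedSum hr hqr htr
  have hA' := hasSum_markedSum hr hqr ht'r
  have hq : ‖q‖ < 1 := hqr.trans_lt hr
  have hB := hasSum_phi21zero hq
  rw [tsum_congr (PartL.tsum_tsum_eigenvalue hq (htr.trans_lt hr) (ht'r.trans_lt hr)),
    (((hA.mul_left T).sub (hA'.mul_left T⁻¹)).add (hB.mul_left (1 / (T⁻¹ - T)))).tsum_eq]
  ring

/-- The Bloch-Okounkov 1-point `a_∞`-function of level `-1`, charge `0`.
Here `t = T²`, so `t^{λ_i-1/2} = T^{2λ_i-1}`, `t^{-μ_i+1/2} = (T⁻¹)^{2μ_i-1}`,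
and `1/(t^{-1/2}-t^{1/2}) = 1/(T⁻¹-T)`.  The basis vector of the charge-zero
Fock space indexed by a pair of partitions `(λ,μ)` of equal length `l` is an
eigenvector of `q^{L₀}A(t)` with eigenvalue
`q^{|λ|+|μ|-l}(Σ_i (t^{λ_i-1/2}-t^{-μ_i+1/2}) + 1/(t^{-1/2}-t^{1/2}))`, and the
trace sums these eigenvalues.  In the one-based sums over `i ≥ 1` on the
right-hand side we write `i = a + 1`. -/
theorem stmt17 (q T : ℂ) (hq : ‖q‖ < 1) (hT : ‖T‖ < 1) (hT0 : T ≠ 0)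
    (hqT : ‖q‖ < ‖T‖ ^ 2) :
    ∑' l : ℕ, ∑' p : PartL l, ∑' m : PartL l,
        q ^ ((∑ i, p.1 i) + (∑ i, m.1 i) - l) *
          ((∑ i, (T ^ (2 * p.1 i - 1) - (T⁻¹) ^ (2 * m.1 i - 1))) +
            1 / (T⁻¹ - T)) =
      phi21zero q / (T⁻¹ - T) +
        T * ∑' a : ℕ, q ^ a / (qPoch q q a) ^ 2 *
            (phi32zero (T ^ 2 * q ^ (a + 1)) (q ^ (a + 1)) q - 1) -
        T⁻¹ * ∑' a : ℕ, q ^ a / (qPoch q q a) ^ 2 *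
            (phi32zero ((T ^ 2)⁻¹ * q ^ (a + 1)) (q ^ (a + 1)) q - 1) :=
  stmt17_general q T hT hqT
end
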